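/- Let G be a connected finite simple graph on n vertices and let ω(G) denote the clique number of G (the maximal size of a clique in G). If ω(G) ≥ n − 2, then G is weakly closed. -/
import Mathlib


/-- `G` is weakly closed: some labeling of the vertices by `1, …, n` is such that for
every edge `{i, j}` with `i < j` and every `i < k < j`, `{i,k} ∈ E(G)` or `{k,j} ∈ E(G)`. -/
def WeaklyClosed {V : Type*} [Fintype V] (G : SimpleGraph V) : Prop :=
  ∃ σ : V ≃ Fin (Fintype.card V), ∀ i j k : V,
    G.Adj i j → σ i < σ k → σ k < σ j → G.Adj i k ∨ G.Adj k j

private lemma weaklyClosed_aux {V : Type*} [Fintype V] (G : SimpleGraph V)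
    (f : V → ℕ) (hf : Function.Injective f)
    (hcond : ∀ i j k : V, G.Adj i j → f i < f k → f k < f j → G.Adj i k ∨ G.Adj k j) :
    WeaklyClosed G := by
  letI : LinearOrder V := LinearOrder.lift' f hf
  let e : Fin (Fintype.card V) ≃o V := monoEquivOfFin V rfl
  refine ⟨e.symm.toEquiv, ?_⟩
  intro i j k hij hik hkj
  exact hcond i j k hij (e.symm.lt_iff_lt.mp hik) (e.symm.lt_iff_lt.mp hkj)

/-- A connected finite simple graph on `n` vertices with clique number at least `n - 2`
is weakly closed. -/
theorem weaklyClosed_of_large_cliqueNum {V : Type*} [Fintype V]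
    (G : SimpleGraph V) (hconn : G.Connected)
    (h : Fintype.card V - 2 ≤ G.cliqueNum) : WeaklyClosed G := by
  classical
  rcases isEmpty_or_nonempty V with hV | hV
  · haveI := hV
    haveI : IsEmpty (Fin (Fintype.card V)) := by
      rw [Fintype.card_eq_zero]; infer_instance
    exact ⟨Equiv.equivOfIsEmpty V (Fin (Fintype.card V)), fun i => (hV.false i).elim⟩
  obtain ⟨a0⟩ := hV
  obtain ⟨S, hS⟩ := G.exists_isNClique_cliqueNum
  have hclique : G.IsClique (S : Set V) := hS.isClique
  have hScard : Fintype.card V - 2 ≤ S.card := by rw [hS.card_eq]; exact h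
  set n := Fintype.card V with hn
  have hTcard : Sᶜ.card ≤ 2 := by
    have h1 := Finset.card_compl S
    have hle : S.card ≤ n := Finset.card_le_card (Finset.subset_univ S) |>.trans (by simp [hn])
    omega
  -- get two (not necessarily distinct) vertices covering the complement of S
  have hab : ∃ a b : V, ∀ x, x ∉ S → x = a ∨ x = b := by
    have hmem : ∀ x, x ∉ S ↔ x ∈ Sᶜ := by simp
    obtain h0 | h1 | h2 : Sᶜ.card = 0 ∨ Sᶜ.card = 1 ∨ Sᶜ.card = 2 := by omega
    · refine ⟨a0, a0, fun x hx => ?_⟩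
      rw [hmem, Finset.card_eq_zero.mp h0] at hx
      exact absurd hx (Finset.notMem_empty x)
    · obtain ⟨a, ha⟩ := Finset.card_eq_one.mp h1
      refine ⟨a, a, fun x hx => ?_⟩
      rw [hmem, ha, Finset.mem_singleton] at hx
      exact Or.inl hx
    · obtain ⟨a, b, _, hab⟩ := Finset.card_eq_two.mp h2
      refine ⟨a, b, fun x hx => ?_⟩
      rw [hmem, hab] at hx
      simpa using hx
  obtain ⟨a, b, hab⟩ := hab
  -- a ranking of the vertices with values < n
  set g : V → ℕ := fun x => ((Fintype.equivFin V) x : ℕ) with hg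
  have hginj : Function.Injective g := fun x y hxy =>
    (Fintype.equivFin V).injective (Fin.ext hxy)
  have hglt : ∀ x, g x < n := fun x => (Fintype.equivFin V x).isLt
  have hadj : ∀ x y : V, x ∈ S → y ∈ S → x ≠ y → G.Adj x y := fun x y hx hy hxy =>
    hclique hx hy hxy
  by_cases hABeq : a = b
  · -- complement ⊆ {a} : put a first
    subst hABeq
    refine weaklyClosed_aux G (fun x => if x = a then 0 else g x + 1) ?_ ?_
    · intro x y hxy
      simp only [] at hxy
      by_cases hx : x = a <;> by_cases hy : y = a
      · rw [hx, hy]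
      · exfalso; rw [if_pos hx, if_neg hy] at hxy; omega
      · exfalso; rw [if_neg hx, if_pos hy] at hxy; omega
      · rw [if_neg hx, if_neg hy] at hxy; exact hginj (by omega)
    · intro i j k hij hik hkj
      have hkne : k ≠ a := by
        intro hk; rw [if_pos hk] at hik; omega
      have hkS : k ∈ S := by
        by_contra hkS; rcases hab k hkS with h1 | h1 <;> exact hkne h1
      by_cases hiS : i ∈ S
      · exact Or.inl (hadj i k hiS hkS (by rintro rfl; omega))
      · have hjne : j ≠ a := by
          intro hj; rw [if_pos hj] at hkj; omega
        have hjS : j ∈ S := by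
          by_contra hjS; rcases hab j hjS with h1 | h1 <;> exact hjne h1
        exact Or.inr (hadj k j hkS hjS (by rintro rfl; omega))
  by_cases hAB : G.Adj a b
  · -- a ~ b : clique first, then a, then b
    refine weaklyClosed_aux G
      (fun x => if x = a then n else if x = b then n + 1 else g x) ?_ ?_
    · intro x y hxy
      simp only [] at hxy
      have hx' := hglt x; have hy' := hglt y
      by_cases hx : x = a <;> by_cases hy : y = a
      · rw [hx, hy]
      · exfalso; rw [if_pos hx, if_neg hy] at hxy
        by_cases hy2 : y = b
        · rw [if_pos hy2] at hxy; omega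
        · rw [if_neg hy2] at hxy; omega
      · exfalso; rw [if_neg hx, if_pos hy] at hxy
        by_cases hx2 : x = b
        · rw [if_pos hx2] at hxy; omega
        · rw [if_neg hx2] at hxy; omega
      · rw [if_neg hx, if_neg hy] at hxy
        by_cases hx2 : x = b <;> by_cases hy2 : y = b
        · rw [hx2, hy2]
        · exfalso; rw [if_pos hx2, if_neg hy2] at hxy; omega
        · exfalso; rw [if_neg hx2, if_pos hy2] at hxy; omega
        · rw [if_neg hx2, if_neg hy2] at hxy; exact hginj (by omega)
    · intro i j k hij hik hkj
      have hjub : (if j = a then n else if j = b then n + 1 else g j) ≤ n + 1 := by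
        have := hglt j; split_ifs <;> omega
      have hknb : k ≠ b := by
        intro hk
        rw [if_neg (show k ≠ a by rw [hk]; exact fun e => hABeq e.symm), if_pos hk] at hkj
        omega
      by_cases hka : k = a
      · -- then j must be b
        rw [if_pos hka] at hkj
        have hjb : j = b := by
          by_contra hjb
          by_cases hja : j = a
          · rw [if_pos hja] at hkj; omega
          · rw [if_neg hja, if_neg hjb] at hkj; have := hglt j; omega
        exact Or.inr (hjb ▸ hka ▸ hAB)
      · have hkS : k ∈ S := by
          by_contra hkS; rcases hab k hkS with h1 | h1 <;> [exact hka h1; exact hknb h1]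
        rw [if_neg hka, if_neg hknb] at hik hkj
        have hkn : g k < n := hglt k
        have hia : i ≠ a := by intro hi; rw [if_pos hi] at hik; omega
        have hib : i ≠ b := by
          intro hi; rw [if_neg (hi ▸ fun e => hABeq e.symm : i ≠ a), if_pos hi] at hik; omega
        have hiS : i ∈ S := by
          by_contra hiS; rcases hab i hiS with h1 | h1 <;> [exact hia h1; exact hib h1]
        rw [if_neg hia, if_neg hib] at hik
        exact Or.inl (hadj i k hiS hkS (by rintro rfl; omega))
  · -- a ≁ b : a first, clique, then b
    refine weaklyClosed_aux G
      (fun x => if x = a then 0 else if x = b then n + 1 else g x + 1) ?_ ?_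
    · intro x y hxy
      simp only [] at hxy
      have hx' := hglt x; have hy' := hglt y
      by_cases hx : x = a <;> by_cases hy : y = a
      · rw [hx, hy]
      · exfalso; rw [if_pos hx, if_neg hy] at hxy
        by_cases hy2 : y = b
        · rw [if_pos hy2] at hxy; omega
        · rw [if_neg hy2] at hxy; omega
      · exfalso; rw [if_neg hx, if_pos hy] at hxy
        by_cases hx2 : x = b
        · rw [if_pos hx2] at hxy; omega
        · rw [if_neg hx2] at hxy; omega
      · rw [if_neg hx, if_neg hy] at hxy
        by_cases hx2 : x = b <;> by_cases hy2 : y = b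
        · rw [hx2, hy2]
        · exfalso; rw [if_pos hx2, if_neg hy2] at hxy; omega
        · exfalso; rw [if_neg hx2, if_pos hy2] at hxy; omega
        · rw [if_neg hx2, if_neg hy2] at hxy; exact hginj (by omega)
    · intro i j k hij hik hkj
      have hka : k ≠ a := by intro hk; rw [if_pos hk] at hik; omega
      have hkb : k ≠ b := by
        intro hk
        rw [if_neg (hk ▸ fun e => hABeq e.symm : k ≠ a), if_pos hk] at hkj
        have := hglt j; split_ifs at hkj <;> omega
      have hkS : k ∈ S := by
        by_contra hkS; rcases hab k hkS with h1 | h1 <;> [exact hka h1; exact hkb h1]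
      rw [if_neg hka, if_neg hkb] at hik hkj
      by_cases hiS : i ∈ S
      · exact Or.inl (hadj i k hiS hkS
          (by rintro rfl; rw [if_neg hka, if_neg hkb] at hik; omega))
      · rcases hab i hiS with hia | hib
        · -- i = a, so j ≠ a; if j = b then Adj a b, contradiction; so j ∈ S
          have hja : j ≠ a := by intro hj; rw [if_pos hj] at hkj; omega
          have hjb : j ≠ b := by
            intro hj; exact hAB (hia ▸ hj ▸ hij)
          have hjS : j ∈ S := by
            by_contra hjS; rcases hab j hjS with h1 | h1 <;> [exact hja h1; exact hjb h1]
          exact Or.inr (hadj k j hkS hjS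
            (by rintro rfl; rw [if_neg hka, if_neg hkb] at hkj; omega))
        · -- i = b : impossible since f i would be maximal
          exfalso
          rw [if_neg (hib ▸ fun e => hABeq e.symm : i ≠ a), if_pos hib] at hik
          have := hglt k; omega
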